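/- arXiv:1811.08724 — 6 statements merged into one kernel-verified Lean document; each statement's English description precedes it below -/
import Mathlib

section
/- Let R be a commutative ring, n ≥ 1, and A an n×n matrix over R such that every row sum of A is zero (for every i, ∑_j A_{ij} = 0). Then within each row the cofactors of A are all equal: for every i and every pair of column indices j, k, the (i,j) cofactor of A equals the (i,k) cofactor of A. -/
open Matrix

/-- The `(i,j)` cofactor of a square matrix: `(-1)^(i+j)` times the determinant of the
matrix obtained by deleting row `i` and column `j`. -/
def Matrix.cofactor {R : Type*} [CommRing R] {n : ℕ}
    (A : Matrix (Fin (n + 1)) (Fin (n + 1)) R) (i j : Fin (n + 1)) : R :=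
  (-1 : R) ^ ((i : ℕ) + (j : ℕ)) * (A.submatrix i.succAbove j.succAbove).det

lemma det_eq_zero_of_row_sums_zero {R : Type*} [CommRing R] {n : ℕ}
    (M : Matrix (Fin (n + 1)) (Fin (n + 1)) R) (h : ∀ i, ∑ j, M i j = 0) :
    M.det = 0 := by
  have hmv : M *ᵥ (fun _ => (1 : R)) = 0 := by
    ext i; simpa [Matrix.mulVec, dotProduct] using h i
  have h2 : (M.adjugate * M) *ᵥ (fun _ => (1 : R)) = 0 := by
    rw [← Matrix.mulVec_mulVec, hmv, Matrix.mulVec_zero]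
  rw [Matrix.adjugate_mul, Matrix.smul_mulVec, Matrix.one_mulVec] at h2
  simpa using congrFun h2 0

/-- If every row sum of a square matrix is zero, then within each row all cofactors
are equal. -/
theorem cofactor_eq_of_row_sums_zero {R : Type*} [CommRing R] {n : ℕ}
    (A : Matrix (Fin (n + 1)) (Fin (n + 1)) R)
    (hrow : ∀ i, ∑ j, A i j = 0) (i j k : Fin (n + 1)) :
    A.cofactor i j = A.cofactor i k := by
  have hc : ∀ j, A.cofactor i j = (A.updateRow i (Pi.single j 1)).det := by
    intro j
    rw [Matrix.cofactor, ← Matrix.adjugate_apply, Matrix.adjugate_fin_succ_eq_det_submatrix,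
      add_comm (i : ℕ)]
  rw [hc, hc]
  have key : (A.updateRow i (Pi.single j 1 - Pi.single k 1)).det = 0 := by
    apply det_eq_zero_of_row_sums_zero
    intro r
    by_cases hr : r = i
    · subst hr
      simp [Matrix.updateRow_self, Finset.sum_sub_distrib]
    · simp only [Matrix.updateRow_ne hr]
      exact hrow r
  have := Matrix.det_updateRow_add A i (Pi.single j 1 - Pi.single k 1) (Pi.single k 1)
  rw [sub_add_cancel, key] at this
  linear_combination this
end

section
/- Let R be a commutative ring, n ≥ 1, and A an n×n matrix over R such that every column sum of A is zero (for every j, ∑_i A_{ij} = 0). Then within each column the cofactors of A are all equal: for every j and every pair of row indices i, k, the (i,j) cofactor of A equals the (k,j) cofactor of A. -/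
open Matrix

lemma cofactor_eq_det_updateColumn {R : Type*} [CommRing R] {n : ℕ}
    (A : Matrix (Fin (n + 1)) (Fin (n + 1)) R) (i j : Fin (n + 1)) :
    A.cofactor i j = (A.updateCol j (Pi.single i 1)).det := by
  have h := Matrix.adjugate_fin_succ_eq_det_submatrix Aᵀ i j
  rw [Matrix.adjugate_apply, Matrix.updateRow_transpose, Matrix.det_transpose] at h
  have h2 : (Aᵀ.submatrix j.succAbove i.succAbove) = (A.submatrix i.succAbove j.succAbove)ᵀ := rfl
  rw [h2, Matrix.det_transpose] at h
  rw [Matrix.cofactor, h, Nat.add_comm]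

lemma det_eq_zero_of_sum_rows_eq_zero {R : Type*} [CommRing R] {n : ℕ}
    (M : Matrix (Fin (n + 1)) (Fin (n + 1)) R) (h : ∑ r, M r = 0) : M.det = 0 := by
  have := Matrix.det_updateRow_sum M 0 (fun _ => (1 : R))
  simp only [one_smul] at this
  rw [h] at this
  rw [← this]
  exact Matrix.det_eq_zero_of_row_eq_zero 0 (fun j => by simp)

/-- If every column sum of a square matrix is zero, then within each column all cofactors
are equal. -/
theorem cofactor_eq_of_col_sums_zero {R : Type*} [CommRing R] {n : ℕ}
    (A : Matrix (Fin (n + 1)) (Fin (n + 1)) R)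
    (hcol : ∀ j, ∑ i, A i j = 0) (j i k : Fin (n + 1)) :
    A.cofactor i j = A.cofactor k j := by
  rw [cofactor_eq_det_updateColumn, cofactor_eq_det_updateColumn]
  have hsingle : (Pi.single i 1 : Fin (n + 1) → R)
      = (Pi.single i 1 - Pi.single k 1) + Pi.single k 1 := by
    rw [sub_add_cancel]
  rw [hsingle, Matrix.det_updateCol_add, add_eq_right]
  apply det_eq_zero_of_sum_rows_eq_zero
  funext c
  refine (Finset.sum_apply (M := fun _ => R) c Finset.univ
    fun r => A.updateCol j (Pi.single i 1 - Pi.single k 1) r).trans ?_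
  by_cases hc : c = j
  · subst hc
    simp [Matrix.updateCol_self, Finset.sum_sub_distrib]
  · simp only [Matrix.updateCol_apply, hc, if_false]
    exact hcol c
end

section
/- Let R be a commutative ring, n ≥ 1, and A an n×n equicofactor matrix over R (every row sum and every column sum of A is zero), and let c be the common value of all cofactors of A. Then the coefficient of X^1 in the characteristic polynomial det(X·I − A) of A equals (−1)^{n−1} · n · c. -/
open Matrix

open Polynomial

/-- Leibniz rule for the derivative of a finite product of polynomials. -/
lemma derivative_finset_prod' {R : Type*} [CommRing R] {ι : Type*} [DecidableEq ι]
    (s : Finset ι) (f : ι → R[X]) :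
    derivative (∏ b ∈ s, f b) = ∑ b ∈ s, (∏ a ∈ s.erase b, f a) * derivative (f b) := by
  induction s using Finset.induction_on with
  | empty => simp
  | @insert i s hi ih =>
    rw [Finset.prod_insert hi, derivative_mul, ih, Finset.sum_insert hi,
      Finset.erase_insert hi, Finset.mul_sum, mul_comm (derivative (f i))]
    congr 1
    refine Finset.sum_congr rfl fun j hj => ?_
    rw [Finset.erase_insert_of_ne (by rintro rfl; exact hi hj),
      Finset.prod_insert (fun h => hi (Finset.mem_of_mem_erase h)), mul_assoc]

/-- The derivative of the determinant of a matrix of polynomials is the sum over columns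
of the determinant with that column differentiated. -/
lemma derivative_det' {R : Type*} [CommRing R] {m : Type*} [DecidableEq m] [Fintype m]
    (M : Matrix m m R[X]) :
    derivative M.det = ∑ j, (M.updateCol j fun i => derivative (M i j)).det := by
  simp_rw [Matrix.det_apply]
  rw [Finset.sum_comm]
  rw [map_sum]
  refine Finset.sum_congr rfl fun σ _ => ?_
  rw [Units.smul_def, map_zsmul, derivative_finset_prod', Finset.smul_sum]
  refine Finset.sum_congr rfl fun j _ => ?_
  rw [← Units.smul_def]
  congr 1
  rw [← Finset.mul_prod_erase Finset.univ _ (Finset.mem_univ j)]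
  rw [Matrix.updateCol_apply, if_pos rfl, mul_comm]
  congr 1
  refine Finset.prod_congr rfl fun i hi => ?_
  rw [Matrix.updateCol_apply, if_neg (Finset.ne_of_mem_erase hi)]

/-- For an equicofactor matrix of size `n + 1` with common cofactor value `c`, the
coefficient of `X^1` in the characteristic polynomial `det (X • 1 - A)` equals
`(-1)^((n+1)-1) * (n+1) * c`. -/
theorem charpoly_coeff_one_of_equicofactor {R : Type*} [CommRing R] {n : ℕ}
    (A : Matrix (Fin (n + 1)) (Fin (n + 1)) R)
    (hrow : ∀ i, ∑ j, A i j = 0) (hcol : ∀ j, ∑ i, A i j = 0)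
    (c : R) (hc : ∀ i j, A.cofactor i j = c) :
    A.charpoly.coeff 1 = (-1 : R) ^ n * (n + 1 : R) * c := by
  have h1 : A.charpoly.coeff 1 = (derivative A.charpoly).eval 0 := by
    rw [← coeff_zero_eq_eval_zero, coeff_derivative]; simp
  rw [h1, Matrix.charpoly, derivative_det']
  have h2 : ∀ j : Fin (n + 1),
      ((charmatrix A).updateCol j fun i => derivative (charmatrix A i j)).det
        = adjugate (charmatrix A) j j := by
    intro j
    have he : (fun i => derivative (charmatrix A i j)) = Pi.single j (1 : R[X]) := by
      funext i
      by_cases h : i = j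
      · subst h; rw [charmatrix_apply_eq]; simp
      · rw [charmatrix_apply_ne _ _ _ h]; simp [Pi.single_apply, h]
    have h4 : adjugate (charmatrix A) j j
        = ((charmatrix A)ᵀ.updateRow j (Pi.single j 1)).det := by
      rw [← Matrix.adjugate_apply, ← Matrix.adjugate_transpose, Matrix.transpose_apply]
    rw [he, h4, Matrix.updateRow_transpose, Matrix.det_transpose]
  simp_rw [h2]
  rw [eval_finset_sum]
  have h5 : ∀ j : Fin (n + 1), eval 0 (adjugate (charmatrix A) j j) = adjugate (-A) j j := by
    intro j
    have hmap : (charmatrix A).map (eval 0) = -A := by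
      ext i k
      by_cases h : i = k
      · subst h; simp [charmatrix_apply_eq]
      · simp [charmatrix_apply_ne _ _ _ h, h]
    have := RingHom.map_adjugate (evalRingHom (0 : R)) (charmatrix A)
    calc eval 0 (adjugate (charmatrix A) j j)
        = ((adjugate (charmatrix A)).map (evalRingHom 0)) j j := rfl
      _ = (adjugate ((charmatrix A).map (evalRingHom 0))) j j := by
          rw [← RingHom.mapMatrix_apply, this, RingHom.mapMatrix_apply]
      _ = adjugate (-A) j j :=
          congrArg (fun M => adjugate M j j) hmap
  simp_rw [h5]
  have h6 : adjugate (-A) = (-1 : R) ^ n • adjugate A := by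
    have : (-A) = (-1 : R) • A := by simp
    rw [this, Matrix.adjugate_smul]
    simp [Fintype.card_fin]
  have h7 : ∀ j : Fin (n + 1), adjugate A j j = c := by
    intro j
    rw [Matrix.adjugate_fin_succ_eq_det_submatrix]
    exact hc j j
  simp_rw [h6, Matrix.smul_apply, h7, smul_eq_mul]
  rw [Finset.sum_const, Finset.card_univ, Fintype.card_fin, nsmul_eq_mul]
  push_cast
  ring
end

section
/- Let R be a commutative ring, n ≥ 1, and A an arbitrary n×n matrix over R, and let Ã be the (n+1)×(n+1) bordered matrix of A. Then every cofactor of Ã equals det(A): for all indices i, j ∈ {1, …, n+1}, the (i,j) cofactor of Ã equals det(A). -/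
open Matrix

/-- The bordered matrix of an `n × n` matrix `A`: append a column of negated row sums,
a row of negated column sums, and the total sum of entries in the corner. -/
def Matrix.bordered {R : Type*} [CommRing R] {n : ℕ} (A : Matrix (Fin n) (Fin n) R) :
    Matrix (Fin (n + 1)) (Fin (n + 1)) R :=
  Matrix.of fun i j =>
    if hi : (i : ℕ) < n then
      if hj : (j : ℕ) < n then A ⟨i, hi⟩ ⟨j, hj⟩
      else -∑ j', A ⟨i, hi⟩ j'
    else
      if hj : (j : ℕ) < n then -∑ i', A i' ⟨j, hj⟩
      else ∑ i', ∑ j', A i' j'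

lemma succAbove_val (n:ℕ) (i : Fin (n+1)) (k : Fin n) :
    ((i.succAbove k : ℕ) = if (k:ℕ) < (i:ℕ) then (k:ℕ) else (k:ℕ)+1) := by
  rw [Fin.succAbove]
  split
  · rw [if_pos]; · simp
    · simpa [Fin.lt_def] using ‹_›
  · rw [if_neg]; · simp
    · simp only [Fin.lt_def, Fin.coe_castSucc, not_lt] at *; omega

/-- border helper matrix `[I; -1ᵀ]`. -/
def borderL (R : Type*) [CommRing R] (n : ℕ) : Matrix (Fin (n+1)) (Fin n) R :=
  Matrix.of fun i k => if (i:ℕ) = (k:ℕ) then 1 else if (i:ℕ) = n then -1 else 0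

lemma mulL_apply {R : Type*} [CommRing R] {n : ℕ} (A : Matrix (Fin n) (Fin n) R)
    (i : Fin (n+1)) (l : Fin n) :
    (borderL R n * A) i l = if hi : (i:ℕ) < n then A ⟨i, hi⟩ l else -∑ k, A k l := by
  rw [Matrix.mul_apply]
  split
  · rename_i hi
    rw [Finset.sum_eq_single (⟨i, hi⟩ : Fin n)]
    · simp [borderL]
    · intro b _ hb
      have : (i:ℕ) ≠ (b:ℕ) := by
        intro h; apply hb; apply Fin.ext; simp [← h]
      simp [borderL, this]; intro h; omega
    · simp
  · rename_i hi
    have hi' : (i:ℕ) = n := by omega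
    rw [← Finset.sum_neg_distrib]
    apply Finset.sum_congr rfl
    intro k _
    have h1 : (i:ℕ) ≠ (k:ℕ) := by have := k.isLt; omega
    have h2 : ¬ (n = (k:ℕ)) := by have := k.isLt; omega
    simp [borderL, h1, h2, hi']

lemma bordered_eq_mul {R : Type*} [CommRing R] {n : ℕ} (A : Matrix (Fin n) (Fin n) R) :
    A.bordered = borderL R n * A * (borderL R n)ᵀ := by
  ext i j
  rw [Matrix.mul_apply]
  simp only [transpose_apply]
  by_cases hj : (j:ℕ) < n
  · rw [Finset.sum_eq_single (⟨j, hj⟩ : Fin n)]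
    · rw [mulL_apply]
      simp [Matrix.bordered, borderL, hj]
    · intro b _ hb
      have : (j:ℕ) ≠ (b:ℕ) := by
        intro h; apply hb; apply Fin.ext; simp [← h]
      simp [borderL, this]; intro h; omega
    · simp
  · have hj' : (j:ℕ) = n := by have := j.isLt; omega
    have : ∀ l : Fin n, (borderL R n * A) i l * borderL R n j l = -(borderL R n * A) i l := by
      intro l
      have h1 : (j:ℕ) ≠ (l:ℕ) := by have := l.isLt; omega
      have h2 : ¬ (n = (l:ℕ)) := by have := l.isLt; omega
      simp [borderL, h1, h2, hj']
    rw [Finset.sum_congr rfl fun l _ => this l]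
    simp only [mulL_apply]
    by_cases hi : (i:ℕ) < n
    · simp [Matrix.bordered, hi, hj]
    · simp only [Matrix.bordered, hi, hj, of_apply, dif_neg, neg_neg, dite_false]
      rw [Finset.sum_comm]

lemma det_borderL_submatrix {R : Type*} [CommRing R] {n : ℕ} (i : Fin (n+1)) :
    ((borderL R n).submatrix i.succAbove id).det = (-1:R)^(n + (i:ℕ)) := by
  by_cases hi : (i:ℕ) = n
  · have hM : (borderL R n).submatrix i.succAbove id = 1 := by
      ext k l
      have hv := succAbove_val n i k
      rw [if_pos (by have := k.isLt; omega)] at hv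
      simp only [Matrix.submatrix_apply, id, borderL, Matrix.of_apply, hv, Matrix.one_apply]
      have h2 : ¬((k:ℕ) = n) := by have := k.isLt; omega
      by_cases h : k = l
      · simp [h]
      · have h3 : ¬((k:ℕ) = (l:ℕ)) := fun hh => h (Fin.ext hh)
        simp [h, h3, h2]
    rw [hM, Matrix.det_one, hi, ← two_mul, pow_mul]
    simp
  · have hi' : (i:ℕ) < n := by have := i.isLt; omega
    cases n with
    | zero => omega
    | succ m =>
      have hi2 : (i:ℕ) < m + 1 := hi'
      rw [Matrix.det_succ_row _ (Fin.last m)]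
      rw [Finset.sum_eq_single (⟨(i:ℕ), hi2⟩ : Fin (m+1))]
      · have hlast : ((i.succAbove (Fin.last m) : ℕ)) = m+1 := by
          rw [succAbove_val, if_neg (by simp; omega)]; simp
        have hentry : (borderL R (m+1)).submatrix i.succAbove id (Fin.last m) ⟨(i:ℕ), by omega⟩ = -1 := by
          simp only [Matrix.submatrix_apply, id, borderL, Matrix.of_apply, hlast]
          rw [if_neg (show ¬ (m+1 = ((⟨(i:ℕ), hi2⟩ : Fin (m+1)):ℕ)) from by omega)]
          simp
        have hminor : (((borderL R (m+1)).submatrix i.succAbove id).submatrix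
            (Fin.last m).succAbove (Fin.succAbove ⟨(i:ℕ), hi2⟩)) = 1 := by
          ext a b
          have h1 : ((Fin.last m).succAbove a : ℕ) = a := by
            rw [succAbove_val, if_pos (by simp [a.isLt])]
          have h2 := succAbove_val (m+1) i ((Fin.last m).succAbove a)
          rw [h1] at h2
          have h3 : ((Fin.succAbove (⟨(i:ℕ), hi2⟩ : Fin (m+1)) b : Fin (m+1)) : ℕ)
              = if (b:ℕ) < (i:ℕ) then (b:ℕ) else (b:ℕ)+1 := succAbove_val m ⟨(i:ℕ), hi2⟩ b
          simp only [Matrix.submatrix_apply, id, borderL, Matrix.of_apply]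
          by_cases hab : a = b
          · subst hab
            rw [if_pos (by split at h2 <;> split at h3 <;> omega), Matrix.one_apply_eq]
          · have hab' : (a:ℕ) ≠ (b:ℕ) := fun hh => hab (Fin.ext hh)
            rw [if_neg (by split at h2 <;> split at h3 <;> omega),
                if_neg (by have := a.isLt; split at h2 <;> omega),
                Matrix.one_apply_ne hab]
        rw [hentry, hminor, Matrix.det_one]
        simp only [Fin.val_last]
        have he : m + 1 + (i:ℕ) = (m + (i:ℕ)) + 1 := by omega
        rw [he, pow_succ]
        ring
      · intro l _ hl
        have hl' : (l:ℕ) ≠ (i:ℕ) := fun hh => hl (Fin.ext hh)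
        have hrow : ∃ a : Fin m, (i.succAbove ((Fin.last m).succAbove a) : ℕ) = (l:ℕ) := by
          have hlm := l.isLt
          refine ⟨if h : (l:ℕ) < (i:ℕ) then ⟨l, by omega⟩ else ⟨(l:ℕ)-1, by omega⟩, ?_⟩
          split
          · rename_i h
            have h1 : ((Fin.last m).succAbove (⟨(l:ℕ), by omega⟩ : Fin m) : ℕ) = l := by
              rw [succAbove_val, if_pos (by simp; omega)]
            rw [succAbove_val, h1, if_pos (by omega)]
          · rename_i h
            have h1 : ((Fin.last m).succAbove (⟨(l:ℕ)-1, by omega⟩ : Fin m) : ℕ) = (l:ℕ)-1 := by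
              rw [succAbove_val, if_pos (by simp; omega)]
            rw [succAbove_val, h1, if_neg (by omega)]
            omega
        obtain ⟨a, ha⟩ := hrow
        have hdet : (((borderL R (m+1)).submatrix i.succAbove id).submatrix
            (Fin.last m).succAbove l.succAbove).det = 0 := by
          apply Matrix.det_eq_zero_of_row_eq_zero a
          intro b
          have h3 := succAbove_val m l b
          simp only [Matrix.submatrix_apply, id, borderL, Matrix.of_apply, ha]
          rw [if_neg (by split at h3 <;> omega), if_neg (by have := l.isLt; omega)]
        rw [hdet, mul_zero]
      · simp

/-- Every cofactor of the bordered matrix of `A` equals `det A`. -/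
theorem cofactor_bordered_eq_det {R : Type*} [CommRing R] {n : ℕ} (hn : 1 ≤ n)
    (A : Matrix (Fin n) (Fin n) R) (i j : Fin (n + 1)) :
    A.bordered.cofactor i j = A.det := by
  rw [Matrix.cofactor, bordered_eq_mul,
      Matrix.submatrix_mul _ _ _ id _ Function.bijective_id,
      Matrix.submatrix_mul _ _ _ id _ Function.bijective_id,
      Matrix.submatrix_id_id, ← Matrix.transpose_submatrix,
      Matrix.det_mul, Matrix.det_mul, Matrix.det_transpose,
      det_borderL_submatrix, det_borderL_submatrix]
  have h1 : (-1:R)^((i:ℕ)+(j:ℕ)) * ((-1:R)^(n+(i:ℕ)) * A.det * (-1:R)^(n+(j:ℕ)))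
      = ((-1:R)^(((i:ℕ)+(j:ℕ)+n))) ^ 2 * A.det := by
    rw [← pow_mul]
    ring
  rw [h1, ← pow_mul]
  have h2 : Even (((i:ℕ)+(j:ℕ)+n) * 2) := ⟨(i:ℕ)+(j:ℕ)+n, by ring⟩
  rw [h2.neg_one_pow, one_mul]
end

section
/- Let n ≥ 1 and let L be an n×n real symmetric matrix with zero row sums (for every i, ∑_j L_{ij} = 0), and let λ_1, …, λ_n be the eigenvalues of L (listed with multiplicity via a spectral decomposition). Then for every index i₀ with λ_{i₀} = 0 and every index j ∈ {1, …, n}, the (j,j) cofactor of L satisfies n · det(L with row j and column j deleted) = ∏_{i ≠ i₀} λ_i. -/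
open Matrix

/-- For a real symmetric `n × n` matrix `L` with zero row sums, any diagonal cofactor
(the determinant of `L` with row `j` and column `j` deleted), multiplied by `n`, equals
the product of the eigenvalues of `L` omitting one zero eigenvalue. -/
theorem diag_cofactor_eq_prod_eigenvalues {n : ℕ}
    (L : Matrix (Fin (n + 1)) (Fin (n + 1)) ℝ) (hL : L.IsHermitian)
    (hrow : ∀ i, ∑ j, L i j = 0)
    (i₀ : Fin (n + 1)) (hi₀ : hL.eigenvalues i₀ = 0) (j : Fin (n + 1)) :
    ((n : ℝ) + 1) * (L.submatrix j.succAbove j.succAbove).det =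
      ∏ i ∈ Finset.univ.erase i₀, hL.eigenvalues i := by
  classical
  set U := (hL.eigenvectorUnitary : Matrix (Fin (n + 1)) (Fin (n + 1)) ℝ) with hUdef
  set lam := hL.eigenvalues with hlamdef
  have hspec : L = U * diagonal lam * star U := by
    have := hL.spectral_theorem
    simpa using this
  have hU1 : U * star U = 1 := (Matrix.mem_unitaryGroup_iff).mp hL.eigenvectorUnitary.2
  have hU1' : star U * U = 1 := (Matrix.mem_unitaryGroup_iff').mp hL.eigenvectorUnitary.2
  -- the trace of the adjugate equals the product of the nonzero eigenvalues
  have htr : (adjugate L).trace = ∏ i ∈ Finset.univ.erase i₀, lam i := by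
    have h1 : adjugate L = adjugate (star U) * (adjugate (diagonal lam) * adjugate U) := by
      rw [hspec, adjugate_mul_distrib, adjugate_mul_distrib]
    rw [h1, trace_mul_comm, mul_assoc, ← adjugate_mul_distrib, hU1', adjugate_one, mul_one,
      adjugate_diagonal, trace_diagonal]
    refine Finset.sum_eq_single i₀ (fun i _ hi => ?_) (fun h => absurd (Finset.mem_univ i₀) h)
    exact Finset.prod_eq_zero (Finset.mem_erase.mpr ⟨Ne.symm hi, Finset.mem_univ i₀⟩) hi₀
  rw [← htr]
  rcases eq_or_ne (∏ i ∈ Finset.univ.erase i₀, lam i) 0 with h0 | h0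
  · -- degenerate case: a second zero eigenvalue exists; the minor vanishes
    obtain ⟨i₁, hi₁mem, hi₁⟩ := Finset.prod_eq_zero_iff.mp h0
    have hi₁ne : i₁ ≠ i₀ := Finset.ne_of_mem_erase hi₁mem
    -- construct a kernel vector of L vanishing at coordinate j
    have hUinj : ∀ c : Fin (n + 1) → ℝ, U *ᵥ c = 0 → c = 0 := by
      intro c hc
      have : (star U * U) *ᵥ c = star U *ᵥ (U *ᵥ c) := by rw [← mulVec_mulVec]
      rw [hU1', one_mulVec, hc, mulVec_zero] at this
      exact this
    have hLcol : ∀ c : Fin (n + 1) → ℝ, (∀ i, lam i * c i = 0) → L *ᵥ (U *ᵥ c) = 0 := by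
      intro c hc
      have hd : diagonal lam *ᵥ c = 0 := by
        funext i; simp [mulVec_diagonal, hc i]
      rw [hspec]
      calc (U * diagonal lam * star U) *ᵥ (U *ᵥ c)
          = (U * diagonal lam * (star U * U)) *ᵥ c := by
            rw [mulVec_mulVec, mul_assoc]
        _ = U *ᵥ (diagonal lam *ᵥ c) := by rw [hU1', mul_one, ← mulVec_mulVec]
        _ = 0 := by rw [hd, mulVec_zero]
    obtain ⟨w, hwker, hwj, hwne⟩ :
        ∃ w : Fin (n + 1) → ℝ, L *ᵥ w = 0 ∧ w j = 0 ∧ w ≠ 0 := by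
      set u₀ : Fin (n + 1) → ℝ := U *ᵥ (Pi.single i₀ 1 : Fin (n + 1) → ℝ) with hu₀
      set u₁ : Fin (n + 1) → ℝ := U *ᵥ (Pi.single i₁ 1 : Fin (n + 1) → ℝ) with hu₁
      by_cases hz : u₀ j = 0
      · refine ⟨u₀, hLcol _ ?_, hz, ?_⟩
        · intro i
          by_cases hii : i = i₀
          · subst hii; simp [hi₀]
          · simp [Pi.single_eq_of_ne hii]
        · intro hcon
          have := hUinj ((Pi.single i₀ 1 : Fin (n + 1) → ℝ)) (by rw [← hu₀, hcon])
          have := congrFun this i₀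
          simp at this
      · refine ⟨(u₁ j) • u₀ - (u₀ j) • u₁, ?_, ?_, ?_⟩
        · have : (u₁ j) • u₀ - (u₀ j) • u₁
              = U *ᵥ ((u₁ j) • (Pi.single i₀ 1 : Fin (n + 1) → ℝ) - (u₀ j) • (Pi.single i₁ 1 : Fin (n + 1) → ℝ)) := by
            rw [mulVec_sub, mulVec_smul, mulVec_smul]
          rw [this]
          refine hLcol _ (fun i => ?_)
          by_cases hii : i = i₀
          · subst hii; simp [hi₀]
          · by_cases hii' : i = i₁
            · subst hii'; simp [hi₁]
            · simp [Pi.single_eq_of_ne hii, Pi.single_eq_of_ne hii']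
        · simp [mul_comm]
        · intro hcon
          have h2 : (u₁ j) • (Pi.single i₀ 1 : Fin (n + 1) → ℝ) - (u₀ j) • (Pi.single i₁ 1 : Fin (n + 1) → ℝ) = 0 := by
            apply hUinj
            rw [mulVec_sub, mulVec_smul, mulVec_smul, ← hu₀, ← hu₁]
            exact hcon
          have := congrFun h2 i₁
          simp [Pi.single_eq_of_ne hi₁ne, Pi.single_eq_of_ne (Ne.symm hi₁ne)] at this
          exact hz this
    -- the minor has a nontrivial kernel
    have hdet0 : (L.submatrix j.succAbove j.succAbove).det = 0 := by
      rw [← Matrix.exists_mulVec_eq_zero_iff]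
      refine ⟨fun m => w (j.succAbove m), ?_, ?_⟩
      · obtain ⟨k, hk⟩ := Function.ne_iff.mp hwne
        have hkj : k ≠ j := by rintro rfl; exact hk hwj
        obtain ⟨m, hm⟩ := Fin.exists_succAbove_eq hkj
        intro hcon
        exact hk (by simpa [hm] using congrFun hcon m)
      · funext i
        have h3 := congrFun hwker (j.succAbove i)
        rw [mulVec] at h3
        have h4 := Fin.sum_univ_succAbove (fun k => L (j.succAbove i) k * w k) j
        simp only [dotProduct] at h3
        rw [h4, hwj, mul_zero, zero_add] at h3
        simpa [mulVec, dotProduct, submatrix_apply] using h3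
    rw [hdet0, mul_zero, htr, h0]
  · -- nondegenerate case: the adjugate has all entries equal
    have hprodne : ∀ i, i ≠ i₀ → lam i ≠ 0 := by
      intro i hi
      exact Finset.prod_ne_zero_iff.mp h0 i (Finset.mem_erase.mpr ⟨hi, Finset.mem_univ i⟩)
    have hdetL : L.det = 0 := by
      rw [hL.det_eq_prod_eigenvalues]
      exact Finset.prod_eq_zero (Finset.mem_univ i₀) (by simpa using hi₀)
    have hadj : L * adjugate L = 0 := by
      rw [mul_adjugate, hdetL, zero_smul]
    -- kernel of L is spanned by column i₀ of U
    set u : Fin (n + 1) → ℝ := U *ᵥ (Pi.single i₀ 1 : Fin (n + 1) → ℝ) with hu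
    have hker : ∀ v : Fin (n + 1) → ℝ, L *ᵥ v = 0 → ∃ a : ℝ, v = a • u := by
      intro v hv
      set c := star U *ᵥ v with hc
      have hDc : diagonal lam *ᵥ c = 0 := by
        have h5 : star U *ᵥ (L *ᵥ v) = (diagonal lam * star U) *ᵥ v := by
          rw [hspec, mulVec_mulVec, ← mul_assoc, ← mul_assoc, hU1', one_mul]
        rw [hv, mulVec_zero] at h5
        rw [hc, mulVec_mulVec]
        exact h5.symm
      have hci : ∀ i, i ≠ i₀ → c i = 0 := by
        intro i hi
        have := congrFun hDc i
        simp only [mulVec_diagonal, Pi.zero_apply] at this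
        exact (mul_eq_zero.mp this).resolve_left (hprodne i hi)
      have hcs : c = c i₀ • (Pi.single i₀ 1 : Fin (n + 1) → ℝ) := by
        funext i
        by_cases hii : i = i₀
        · subst hii; simp
        · simp [Pi.single_eq_of_ne hii, hci i hii]
      refine ⟨c i₀, ?_⟩
      have hv2 : v = U *ᵥ c := by
        rw [hc, mulVec_mulVec, hU1, one_mulVec]
      have hv3 : U *ᵥ c = c i₀ • u := by
        rw [hu, ← mulVec_smul]
        exact congrArg _ hcs
      rw [hv2, hv3]
    -- the all-ones vector is in the kernel, so u is a constant vector
    have hone : L *ᵥ (fun _ => (1 : ℝ)) = 0 := by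
      funext i
      simpa [mulVec, dotProduct] using hrow i
    obtain ⟨a, ha⟩ := hker _ hone
    have hau : ∀ i, a * u i = 1 := fun i => (congrFun ha i).symm
    have hane : a ≠ 0 := by
      intro hcon
      have := hau j
      rw [hcon, zero_mul] at this
      exact zero_ne_one this
    have huconst : ∀ i k, u i = u k := by
      intro i k
      exact mul_left_cancel₀ hane ((hau i).trans (hau k).symm)
    -- each column of the adjugate is a multiple of u
    have hcol : ∀ k, ∃ d : ℝ, (fun i => adjugate L i k) = d • u := by
      intro k
      refine hker _ ?_
      funext i
      have := congrFun (congrFun hadj i) k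
      simpa [mulVec, dotProduct, Matrix.mul_apply] using this
    have hcolconst : ∀ i i' k, adjugate L i k = adjugate L i' k := by
      intro i i' k
      obtain ⟨d, hd⟩ := hcol k
      have h6 := congrFun hd i
      have h7 := congrFun hd i'
      simp only [Pi.smul_apply, smul_eq_mul] at h6 h7
      rw [h6, h7, huconst i i']
    have hsym : ∀ i k, adjugate L i k = adjugate L k i := by
      have hLt : Lᵀ = L := by simpa using hL.eq
      have : (adjugate L)ᵀ = adjugate L := by rw [adjugate_transpose, hLt]
      intro i k
      simpa using congrFun (congrFun this.symm i) k
    have hentry : ∀ k, adjugate L k k = adjugate L j j := by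
      intro k
      calc adjugate L k k = adjugate L j k := hcolconst k j k
        _ = adjugate L k j := hsym j k
        _ = adjugate L j j := hcolconst k j j
    have hjj : adjugate L j j = (L.submatrix j.succAbove j.succAbove).det := by
      rw [adjugate_fin_succ_eq_det_submatrix]
      simp [← two_mul, pow_mul]
    rw [trace]
    simp only [diag_apply]
    rw [Finset.sum_congr rfl (fun k _ => hentry k)]
    rw [Finset.sum_const, Finset.card_univ, Fintype.card_fin, hjj]
    ring
end

section
/- Let G be a finite simple graph on a vertex set of size n ≥ 1, let L be its Laplacian matrix over ℝ, and let λ_1, …, λ_n be the eigenvalues of L (listed with multiplicity via a spectral decomposition of the symmetric matrix L). Then for every index i₀ with λ_{i₀} = 0 and every vertex j, n · det(L with row j and column j deleted) = ∏_{i ≠ i₀} λ_i; in particular the quantity det(L with row j and column j deleted) is independent of j and equals (1/n) times the product of the eigenvalues of L omitting one zero eigenvalue. -/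
open Matrix

private lemma lap_mulVec_indicator {n : ℕ} (G : SimpleGraph (Fin (n + 1)))
    [DecidableRel G.Adj] [DecidableEq G.ConnectedComponent] (c : G.ConnectedComponent) :
    G.lapMatrix ℝ *ᵥ (fun i ↦ if G.connectedComponentMk i = c then (1 : ℝ) else 0) = 0 := by
  have := SimpleGraph.mem_ker_toLin'_lapMatrix_of_connectedComponent (G := G) c
  rw [LinearMap.mem_ker] at this
  simpa [Matrix.toLin'_apply] using this

/-- If `G` is disconnected, all `n × n` minors of the Laplacian vanish. -/
private lemma det_minor_eq_zero {n : ℕ} (G : SimpleGraph (Fin (n + 1)))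
    [DecidableRel G.Adj] (h : ∃ u v, ¬ G.Reachable u v) (a b : Fin (n + 1)) :
    ((G.lapMatrix ℝ).submatrix b.succAbove a.succAbove).det = 0 := by
  classical
  obtain ⟨u, v, huv⟩ := h
  have hcc : G.connectedComponentMk u ≠ G.connectedComponentMk v := by
    intro h; exact huv (SimpleGraph.ConnectedComponent.exact h)
  -- pick a component not containing `a`
  obtain ⟨c, hca⟩ : ∃ c : G.ConnectedComponent, c ≠ G.connectedComponentMk a := by
    rcases eq_or_ne (G.connectedComponentMk u) (G.connectedComponentMk a) with h' | h'
    · exact ⟨G.connectedComponentMk v, fun hh => hcc (h'.trans hh.symm)⟩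
    · exact ⟨G.connectedComponentMk u, h'⟩
  set y : Fin (n + 1) → ℝ := fun i ↦ if G.connectedComponentMk i = c then 1 else 0 with hy
  have hLy : G.lapMatrix ℝ *ᵥ y = 0 := lap_mulVec_indicator G c
  have hya : y a = 0 := by simp only [hy]; rw [if_neg (fun hh => hca hh.symm)]
  obtain ⟨w, hw⟩ : ∃ w : Fin (n + 1), G.connectedComponentMk w = c := Quot.exists_rep c
  have hwa : w ≠ a := fun hh => hca (hh ▸ hw).symm
  obtain ⟨k₀, hk₀⟩ := Fin.exists_succAbove_eq hwa
  rw [← Matrix.exists_mulVec_eq_zero_iff]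
  refine ⟨fun k ↦ y (a.succAbove k), ?_, ?_⟩
  · intro hzero
    have := congrFun hzero k₀
    rw [hk₀] at this
    simp [hy, hw] at this
  · funext i
    have hrow : ∑ k : Fin (n + 1), G.lapMatrix ℝ (b.succAbove i) k * y k = 0 := by
      have := congrFun hLy (b.succAbove i)
      simpa [Matrix.mulVec, dotProduct] using this
    rw [Fin.sum_univ_succAbove (fun k => G.lapMatrix ℝ (b.succAbove i) k * y k) a, hya,
      mul_zero, zero_add] at hrow
    simpa [Matrix.mulVec, dotProduct, Matrix.submatrix] using hrow

/-- The trace of the adjugate equals the product of eigenvalues omitting one zero one. -/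
private lemma trace_adjugate_eq_prod {n : ℕ} (G : SimpleGraph (Fin (n + 1)))
    [DecidableRel G.Adj] (hL : (G.lapMatrix ℝ).IsHermitian)
    (i₀ : Fin (n + 1)) (hi₀ : hL.eigenvalues i₀ = 0) :
    (adjugate (G.lapMatrix ℝ)).trace = ∏ i ∈ Finset.univ.erase i₀, hL.eigenvalues i := by
  set U : Matrix (Fin (n + 1)) (Fin (n + 1)) ℝ := (hL.eigenvectorUnitary : Matrix (Fin (n + 1)) (Fin (n + 1)) ℝ)
  set D : Matrix (Fin (n + 1)) (Fin (n + 1)) ℝ :=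
    diagonal (RCLike.ofReal ∘ hL.eigenvalues)
  have hspec : G.lapMatrix ℝ = U * D * star U := hL.spectral_theorem
  have hUU : star U * U = 1 := by
    simpa [U] using unitary.coe_star_mul_self hL.eigenvectorUnitary
  calc (adjugate (G.lapMatrix ℝ)).trace
      = (adjugate (star U) * adjugate D * adjugate U).trace := by
        rw [hspec, adjugate_mul_distrib, adjugate_mul_distrib, Matrix.mul_assoc]
    _ = (adjugate D * (adjugate U * adjugate (star U))).trace := by
        rw [Matrix.trace_mul_comm, ← Matrix.mul_assoc, Matrix.trace_mul_comm]
    _ = (adjugate D).trace := by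
        rw [← adjugate_mul_distrib, hUU, adjugate_one, Matrix.mul_one]
    _ = ∑ i, ∏ k ∈ Finset.univ.erase i, hL.eigenvalues k := by
        simp [D, adjugate_diagonal, Matrix.trace, Matrix.diag]
    _ = ∏ i ∈ Finset.univ.erase i₀, hL.eigenvalues i := by
        refine Finset.sum_eq_single i₀ (fun i _ hii => ?_) (by simp)
        exact Finset.prod_eq_zero (Finset.mem_erase.2 ⟨Ne.symm hii, Finset.mem_univ _⟩) hi₀

/-- For the Laplacian matrix `L` of a finite simple graph on `n` vertices, `n` times any
diagonal minor (delete row `j` and column `j`) equals the product of the eigenvalues of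
`L` omitting one zero eigenvalue; in particular this quantity is independent of `j`. -/
theorem lapMatrix_diag_minor_eq_prod_eigenvalues {n : ℕ}
    (G : SimpleGraph (Fin (n + 1))) [DecidableRel G.Adj]
    (hL : (G.lapMatrix ℝ).IsHermitian)
    (i₀ : Fin (n + 1)) (hi₀ : hL.eigenvalues i₀ = 0) (j : Fin (n + 1)) :
    ((n : ℝ) + 1) * ((G.lapMatrix ℝ).submatrix j.succAbove j.succAbove).det =
      ∏ i ∈ Finset.univ.erase i₀, hL.eigenvalues i := by
  classical
  rw [← trace_adjugate_eq_prod G hL i₀ hi₀]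
  set L := G.lapMatrix ℝ with hLdef
  have hdiag : ∀ a : Fin (n + 1),
      adjugate L a a = (L.submatrix a.succAbove a.succAbove).det := by
    intro a
    rw [adjugate_fin_succ_eq_det_submatrix]
    rw [show ((a : ℕ) + a) = 2 * (a : ℕ) by ring, pow_mul]
    norm_num
  by_cases hP : ∀ u v : Fin (n + 1), G.Reachable u v
  · -- connected case: adjugate is a constant matrix
    have hdet : L.det = 0 := by
      rw [← Matrix.exists_mulVec_eq_zero_iff]
      exact ⟨fun _ => 1, by simp [funext_iff],
        SimpleGraph.lapMatrix_mulVec_const_eq_zero G⟩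
    have hmul : L * adjugate L = 0 := by
      rw [Matrix.mul_adjugate, hdet, zero_smul]
    have hcol : ∀ b a a' : Fin (n + 1), adjugate L a b = adjugate L a' b := by
      intro b a a'
      have hker : Matrix.toLin' L (fun k => adjugate L k b) = 0 := by
        rw [Matrix.toLin'_apply]
        funext i
        have := congrFun (congrFun hmul i) b
        simpa [Matrix.mul_apply, Matrix.mulVec, dotProduct] using this
      exact (SimpleGraph.lapMatrix_mulVec_eq_zero_iff_forall_reachable (G := G)
        (x := fun k => adjugate L k b)).1 hker a a' (hP a a')
    have hsymm : ∀ a b : Fin (n + 1), adjugate L a b = adjugate L b a := by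
      intro a b
      have h1 : (adjugate L)ᵀ = adjugate Lᵀ := adjugate_transpose L
      have h2 : Lᵀ = L := SimpleGraph.isSymm_lapMatrix (R := ℝ) (G := G)
      rw [h2] at h1
      have := congrFun (congrFun h1 b) a
      simpa [Matrix.transpose_apply] using this
    have hconst : ∀ a : Fin (n + 1), adjugate L a a = adjugate L j j := by
      intro a
      calc adjugate L a a = adjugate L j a := hcol a a j
        _ = adjugate L a j := hsymm j a
        _ = adjugate L j j := hcol j a j
    have : (adjugate L).trace = ((n : ℝ) + 1) * adjugate L j j := by
      rw [Matrix.trace]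
      rw [Finset.sum_congr rfl (fun a _ => by
        simpa [Matrix.diag] using hconst a)]
      rw [Finset.sum_const, Finset.card_univ, Fintype.card_fin, nsmul_eq_mul]
      push_cast
      ring
    rw [this, hdiag j]
  · -- disconnected case: everything is zero
    push_neg at hP
    have h0 : ∀ a b : Fin (n + 1),
        ((G.lapMatrix ℝ).submatrix b.succAbove a.succAbove).det = 0 :=
      det_minor_eq_zero G hP
    rw [h0 j j, mul_zero, Matrix.trace]
    refine (Finset.sum_eq_zero fun a _ => ?_).symm
    simpa [Matrix.diag, hdiag a] using (hdiag a).trans (h0 a a)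
end
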